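/- Assume φ is nonzero with φ(p)φ(q) = 0. For any b ∈ ℂ[x] and s, t ∈ ℤ₊, in M_φ one has: (P₋ − φ(P₋))ˢ·(hᵗ b(C)·w) = 0 if s > t, and (P₋ − φ(P₋))ᵗ·(hᵗ b(C)·w) = (φ(p)+φ(q))ᵗ (−1)^{(δ_{φ(p),0}+1)t} t! · b(C)·w. -/

import Mathlib

open UniversalEnvelopingAlgebra Polynomial

namespace QW

variable {S : Type} [LieRing S] [LieAlgebra ℂ S]

/-- The chosen elements `e, h, f, p, q, z` form a basis of `S` and satisfy the
structure constants of the Schrödinger algebra. -/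
structure IsSchrodinger (e h f p q z : S) : Prop where
  indep : LinearIndependent ℂ ![e, h, f, p, q, z]
  spans : Submodule.span ℂ (Set.range ![e, h, f, p, q, z]) = ⊤
  lie_he : ⁅h, e⁆ = (2 : ℂ) • e
  lie_hf : ⁅h, f⁆ = (-2 : ℂ) • f
  lie_ef : ⁅e, f⁆ = h
  lie_hp : ⁅h, p⁆ = p
  lie_hq : ⁅h, q⁆ = -q
  lie_pq : ⁅p, q⁆ = z
  lie_eq : ⁅e, q⁆ = p
  lie_pf : ⁅p, f⁆ = -q
  lie_fq : ⁅f, q⁆ = 0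
  lie_ep : ⁅e, p⁆ = 0
  lie_ze : ⁅z, e⁆ = 0
  lie_zh : ⁅z, h⁆ = 0
  lie_zf : ⁅z, f⁆ = 0
  lie_zp : ⁅z, p⁆ = 0
  lie_zq : ⁅z, q⁆ = 0

/-- `v` is a quasi-Whittaker vector of type `φ`, where the Lie algebra homomorphism
`φ : ℌ → ℂ` is recorded by its values `φp = φ(p)`, `φq = φ(q)` (necessarily `φ(z) = 0`). -/
def IsQWVector (p q z : S) {V : Type} [AddCommGroup V] [Module ℂ V] [LieRingModule S V]
    (φp φq : ℂ) (v : V) : Prop :=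
  v ≠ 0 ∧ ⁅p, v⁆ = φp • v ∧ ⁅q, v⁆ = φq • v ∧ ⁅z, v⁆ = 0

/-- `V` is a quasi-Whittaker module of type `φ`: it is generated by a
quasi-Whittaker vector of type `φ`. -/
def IsQWModule (p q z : S) (V : Type) [AddCommGroup V] [Module ℂ V]
    [LieRingModule S V] [LieModule ℂ S V] (φp φq : ℂ) : Prop :=
  ∃ v : V, IsQWVector p q z φp φq v ∧ LieSubmodule.lieSpan ℂ S {v} = ⊤

/-- The action of the universal enveloping algebra `U(𝔖)` on a `𝔖`-module. -/
noncomputable def uact {V : Type} [AddCommGroup V] [Module ℂ V] [LieRingModule S V]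
    [LieModule ℂ S V] (u : UniversalEnvelopingAlgebra ℂ S) (v : V) : V :=
  UniversalEnvelopingAlgebra.lift ℂ (LieModule.toEnd ℂ S V) u v

/-- The element `C = φ(p)²f − φ(q)²e − φ(p)φ(q)h ∈ U(𝔖)`. -/
noncomputable def Cel (e h f : S) (φp φq : ℂ) : UniversalEnvelopingAlgebra ℂ S :=
  φp ^ 2 • ι ℂ f - φq ^ 2 • ι ℂ e - (φp * φq) • ι ℂ h

/-- The element `C₀ = p²f − q²e − hpq ∈ U(𝔖)`. -/
noncomputable def C0 (e h f p q : S) : UniversalEnvelopingAlgebra ℂ S :=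
  ι ℂ p ^ 2 * ι ℂ f - ι ℂ q ^ 2 * ι ℂ e - ι ℂ h * ι ℂ p * ι ℂ q

/-- `δ_{a,0}`, as a complex scalar. -/
noncomputable def dC (a : ℂ) : ℂ := if a = 0 then 1 else 0

/-- `δ_{a,0}`, as a natural number. -/
noncomputable def dN (a : ℂ) : ℕ := if a = 0 then 1 else 0

/-- `X = δ_{φ(q),0}e + δ_{φ(p),0}f`. -/
noncomputable def Xel (e f : S) (φp φq : ℂ) : UniversalEnvelopingAlgebra ℂ S :=
  dC φq • ι ℂ e + dC φp • ι ℂ f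

/-- `P₊ = δ_{φ(p),0}p + δ_{φ(q),0}q`. -/
noncomputable def Pplus (p q : S) (φp φq : ℂ) : UniversalEnvelopingAlgebra ℂ S :=
  dC φp • ι ℂ p + dC φq • ι ℂ q

/-- `P₋ = δ_{φ(q),0}p + δ_{φ(p),0}q`. -/
noncomputable def Pminus (p q : S) (φp φq : ℂ) : UniversalEnvelopingAlgebra ℂ S :=
  dC φq • ι ℂ p + dC φp • ι ℂ q

/-- The quotient of `U(𝔖)` by a left ideal `I` is a Lie module over `S`. -/
noncomputable instance instLieRingModuleUQuot
    (I : Submodule (UniversalEnvelopingAlgebra ℂ S) (UniversalEnvelopingAlgebra ℂ S)) :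
    LieRingModule S (UniversalEnvelopingAlgebra ℂ S ⧸ I) where
  bracket x m := ι ℂ x • m
  add_lie x y m := by
    show ι ℂ (x + y) • m = ι ℂ x • m + ι ℂ y • m
    rw [map_add, add_smul]
  lie_add x m n := by
    show ι ℂ x • (m + n) = ι ℂ x • m + ι ℂ x • n
    rw [smul_add]
  leibniz_lie x y m := by
    show ι ℂ x • (ι ℂ y • m) = ι ℂ ⁅x, y⁆ • m + ι ℂ y • (ι ℂ x • m)
    letI : LieRing (UniversalEnvelopingAlgebra ℂ S) := LieRing.ofAssociativeRing
    rw [LieHom.map_lie, Ring.lie_def, sub_smul, mul_smul, mul_smul]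
    abel

noncomputable instance instLieModuleUQuot
    (I : Submodule (UniversalEnvelopingAlgebra ℂ S) (UniversalEnvelopingAlgebra ℂ S)) :
    LieModule ℂ S (UniversalEnvelopingAlgebra ℂ S ⧸ I) where
  smul_lie c x m := by
    show ι ℂ (c • x) • m = c • (ι ℂ x • m)
    rw [map_smul, smul_assoc]
  lie_smul c x m := by
    show ι ℂ x • (c • m) = c • (ι ℂ x • m)
    rw [← algebraMap_smul (UniversalEnvelopingAlgebra ℂ S) c m, ← mul_smul,
      ← Algebra.commutes, mul_smul, algebraMap_smul]

/-- The left ideal of `U(𝔖)` generated by `p − φ(p)1`, `q − φ(q)1` and `z`. -/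
noncomputable def qwIdeal (p q z : S) (φp φq : ℂ) :
    Submodule (UniversalEnvelopingAlgebra ℂ S) (UniversalEnvelopingAlgebra ℂ S) :=
  Submodule.span _
    {ι ℂ p - algebraMap ℂ _ φp, ι ℂ q - algebraMap ℂ _ φq, ι ℂ z}

/-- The universal quasi-Whittaker module `M_φ = U(𝔖) ⊗_{U(ℌ)} ℂ_φ`, realised as the
quotient of `U(𝔖)` by the left ideal generated by `p − φ(p)1`, `q − φ(q)1`, `z`. -/
noncomputable abbrev Mphi (p q z : S) (φp φq : ℂ) : Type :=
  UniversalEnvelopingAlgebra ℂ S ⧸ qwIdeal p q z φp φq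

/-- The cyclic quasi-Whittaker vector `w = 1 ⊗ w` of `M_φ`. -/
noncomputable def wvec (p q z : S) (φp φq : ℂ) : Mphi p q z φp φq :=
  Submodule.Quotient.mk 1

/-- The submodule `W_{φ,ξ} = U(𝔖)(C − ξ)·w` of `M_φ`. -/
noncomputable def Wsub (e h f p q z : S) (φp φq ξ : ℂ) :
    LieSubmodule ℂ S (Mphi p q z φp φq) :=
  LieSubmodule.lieSpan ℂ S
    {uact (Cel e h f φp φq - algebraMap ℂ _ ξ) (wvec p q z φp φq)}

/-- The quotient module `L_{φ,ξ} = M_φ / W_{φ,ξ}`. -/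
noncomputable abbrev Lphi (e h f p q z : S) (φp φq ξ : ℂ) : Type :=
  Mphi p q z φp φq ⧸ Wsub e h f p q z φp φq ξ

/-- A (finite, decreasing) composition series `⊤ = W 0 > W 1 > ⋯ > W n = ⊥`
of a Lie module, with all the successive quotients irreducible. -/
def IsCompositionChain {V : Type} [AddCommGroup V] [Module ℂ V] [LieRingModule S V]
    [LieModule ℂ S V] {n : ℕ} (W : Fin (n + 1) → LieSubmodule ℂ S V) : Prop :=
  W 0 = ⊤ ∧ W (Fin.last n) = ⊥ ∧
    ∀ i : Fin n, W i.succ < W i.castSucc ∧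
      LieModule.IsIrreducible ℂ S
        (↥(W i.castSucc) ⧸ LieSubmodule.comap (W i.castSucc).incl (W i.succ))


/-! ### Auxiliary machinery for STATEMENT 4 -/

/-- The finite-difference operator `g ↦ ε·(g(X+ε) − g(X))`. -/
noncomputable def Dop (ε : ℂ) (g : ℂ[X]) : ℂ[X] := ε • ((Polynomial.taylor ε) g - g)

theorem Dop_C (ε a : ℂ) : Dop ε (C a) = 0 := by
  simp [Dop, Polynomial.taylor_apply]

theorem Dop_zero (ε : ℂ) : Dop ε 0 = 0 := by
  simpa using Dop_C ε 0

theorem hasseDeriv_top (t : ℕ) (g : ℂ[X]) (hg : g.natDegree ≤ t + 1) :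
    Polynomial.hasseDeriv (t + 1) g = C (g.coeff (t + 1)) := by
  ext n
  rw [Polynomial.hasseDeriv_coeff]
  match n with
  | 0 => simp
  | n + 1 =>
    rw [Polynomial.coeff_eq_zero_of_natDegree_lt (by omega), Polynomial.coeff_C]
    simp

theorem hasseDeriv_sub_top (t : ℕ) (g : ℂ[X]) (hg : g.natDegree ≤ t + 1) :
    Polynomial.hasseDeriv t g = C (g.coeff t) + C ((t + 1 : ℂ) * g.coeff (t + 1)) * X := by
  ext n
  rw [Polynomial.hasseDeriv_coeff, Polynomial.coeff_add, Polynomial.coeff_C,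
    Polynomial.coeff_C_mul, Polynomial.coeff_X]
  match n with
  | 0 => simp
  | 1 =>
    have : (1 + t).choose t = t + 1 := by
      rw [Nat.add_comm]; exact Nat.choose_succ_self_right t
    rw [this]
    push_cast
    rw [Nat.add_comm 1 t]
    simp
  | n + 2 =>
    rw [Polynomial.coeff_eq_zero_of_natDegree_lt (by omega)]
    simp

theorem Dop_coeff_step (ε : ℂ) (hε : ε * ε = 1) (t : ℕ) (g : ℂ[X]) (hg : g.natDegree ≤ t + 1) :
    (Dop ε g).natDegree ≤ t ∧ (Dop ε g).coeff t = (t + 1 : ℂ) * g.coeff (t + 1) := by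
  constructor
  · rw [Polynomial.natDegree_le_iff_coeff_eq_zero]
    intro m hm
    rw [Dop, Polynomial.coeff_smul, Polynomial.coeff_sub]
    rcases eq_or_lt_of_le (Nat.succ_le_of_lt hm) with hm1 | hm1
    · rw [← hm1, Polynomial.taylor_coeff, hasseDeriv_top t g hg]
      simp
    · rw [Polynomial.coeff_eq_zero_of_natDegree_lt (lt_of_le_of_lt hg hm1),
        Polynomial.coeff_eq_zero_of_natDegree_lt
          (by rw [Polynomial.natDegree_taylor]; exact lt_of_le_of_lt hg hm1)]
      simp
  · rw [Dop, Polynomial.coeff_smul, Polynomial.coeff_sub, Polynomial.taylor_coeff,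
      hasseDeriv_sub_top t g hg]
    simp only [Polynomial.eval_add, Polynomial.eval_C, Polynomial.eval_mul, Polynomial.eval_X]
    rw [smul_eq_mul]
    ring_nf
    rw [show (ε : ℂ) ^ 2 = 1 by rw [sq]; exact hε]
    ring

theorem Dop_iter (ε : ℂ) (hε : ε * ε = 1) :
    ∀ (t : ℕ) (g : ℂ[X]), g.natDegree ≤ t →
      (Dop ε)^[t] g = C ((t.factorial : ℂ) * g.coeff t) := by
  intro t
  induction t with
  | zero =>
    intro g hg
    simpa using (Polynomial.eq_C_of_natDegree_le_zero hg)
  | succ t ih =>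
    intro g hg
    rw [Function.iterate_succ_apply,
      ih _ (Dop_coeff_step ε hε t g hg).1, (Dop_coeff_step ε hε t g hg).2,
      Nat.factorial_succ]
    push_cast
    ring_nf

theorem Dop_iter_X_pow (ε : ℂ) (hε : ε * ε = 1) (t : ℕ) :
    (Dop ε)^[t] (X ^ t) = C (t.factorial : ℂ) := by
  rw [Dop_iter ε hε t (X ^ t) (Polynomial.natDegree_X_pow t).le]
  simp

theorem Dop_iter_X_pow_zero (ε : ℂ) (hε : ε * ε = 1) {s t : ℕ} (hst : t < s) :
    (Dop ε)^[s] (X ^ t) = 0 := by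
  obtain ⟨k, rfl⟩ : ∃ k, s = (t + 1) + k := ⟨s - (t + 1), by omega⟩
  rw [Nat.add_comm, Function.iterate_add_apply, Function.iterate_succ_apply',
    Dop_iter_X_pow ε hε, Dop_C]
  exact Function.iterate_fixed (Dop_zero ε) k

section Alg
variable {R : Type*} [Ring R] [Algebra ℂ R]

theorem comm_shift_pow (u H : R) (ε : ℂ) (h : u * H = (H + algebraMap ℂ R ε) * u) :
    ∀ n : ℕ, u * H ^ n = (H + algebraMap ℂ R ε) ^ n * u := by
  intro n
  induction n with
  | zero => simp
  | succ n ih =>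
    rw [pow_succ', ← mul_assoc, h, mul_assoc, ih, ← mul_assoc, ← pow_succ']

theorem aeval_taylor (H : R) (ε : ℂ) (g : ℂ[X]) :
    aeval H ((Polynomial.taylor ε) g) = aeval (H + algebraMap ℂ R ε) g := by
  induction g using Polynomial.induction_on' with
  | add f g hf hg => rw [map_add, map_add, hf, hg, map_add]
  | monomial n a =>
    rw [Polynomial.taylor_monomial, Polynomial.aeval_monomial, map_mul, Polynomial.aeval_C,
      map_pow, map_add, Polynomial.aeval_X, Polynomial.aeval_C]

theorem comm_shift_aeval (u H : R) (ε : ℂ) (h : u * H = (H + algebraMap ℂ R ε) * u)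
    (g : ℂ[X]) : u * aeval H g = aeval (H + algebraMap ℂ R ε) g * u := by
  induction g using Polynomial.induction_on' with
  | add f g hf hg => rw [map_add, map_add, mul_add, add_mul, hf, hg]
  | monomial n a =>
    rw [Polynomial.aeval_monomial, Polynomial.aeval_monomial, ← mul_assoc,
      ← Algebra.commutes a u, mul_assoc, comm_shift_pow u H ε h n, mul_assoc]

end Alg

section ModAux

variable (I : Submodule (UniversalEnvelopingAlgebra ℂ S) (UniversalEnvelopingAlgebra ℂ S))

set_option maxHeartbeats 2000000 in
theorem uact_eq_smul (u : UniversalEnvelopingAlgebra ℂ S)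
    (m : UniversalEnvelopingAlgebra ℂ S ⧸ I) : uact u m = u • m := by
  have h : (UniversalEnvelopingAlgebra.lift ℂ
      (LieModule.toEnd ℂ S (UniversalEnvelopingAlgebra ℂ S ⧸ I)))
      = Algebra.lsmul ℂ (A := UniversalEnvelopingAlgebra ℂ S) ℂ
          (UniversalEnvelopingAlgebra ℂ S ⧸ I) := by
    symm
    rw [← UniversalEnvelopingAlgebra.lift_unique]
    funext x
    ext n
    rfl
  rw [uact, h]
  rfl

theorem csmul_comm (c : ℂ) (u : UniversalEnvelopingAlgebra ℂ S)
    (m : UniversalEnvelopingAlgebra ℂ S ⧸ I) : u • (c • m) = c • (u • m) := by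
  rw [← algebraMap_smul (UniversalEnvelopingAlgebra ℂ S) c m, ← mul_smul,
    ← Algebra.commutes, mul_smul, algebraMap_smul]

theorem act_pow (u Cc d : UniversalEnvelopingAlgebra ℂ S) (μ : ℂ)
    (v : UniversalEnvelopingAlgebra ℂ S ⧸ I)
    (hcomm : u * Cc = Cc * u + d) (hv : u • v = μ • v)
    (hd : ∀ k : ℕ, d • ((Cc ^ k) • v) = 0) :
    ∀ k : ℕ, u • ((Cc ^ k) • v) = μ • ((Cc ^ k) • v) := by
  intro k
  induction k with
  | zero => simpa using hv
  | succ k ih =>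
    rw [pow_succ', mul_smul, ← mul_smul u, hcomm, add_smul, hd k, add_zero,
      mul_smul, ih, csmul_comm, ← mul_smul, ← pow_succ']

theorem smul_aeval_of_smul_pow (u Cc : UniversalEnvelopingAlgebra ℂ S) (μ : ℂ)
    (v : UniversalEnvelopingAlgebra ℂ S ⧸ I)
    (hk : ∀ k : ℕ, u • ((Cc ^ k) • v) = μ • ((Cc ^ k) • v)) (b : ℂ[X]) :
    u • ((aeval Cc b) • v) = μ • ((aeval Cc b) • v) := by
  induction b using Polynomial.induction_on' with
  | add f g hf hg => rw [map_add, add_smul, smul_add, hf, hg, smul_add]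
  | monomial n a =>
    rw [Polynomial.aeval_monomial, mul_smul, algebraMap_smul, csmul_comm, hk n,
      smul_comm μ a]

theorem Astep (P H : UniversalEnvelopingAlgebra ℂ S) (lam ε : ℂ) (hε : ε * ε = 1)
    (v0 : UniversalEnvelopingAlgebra ℂ S ⧸ I)
    (h1 : P * H = (H + algebraMap ℂ (UniversalEnvelopingAlgebra ℂ S) ε) * P)
    (h2 : P • v0 = lam • v0) (g : ℂ[X]) :
    (P - algebraMap ℂ (UniversalEnvelopingAlgebra ℂ S) lam) • ((aeval H g) • v0)
      = (ε * lam) • ((aeval H (Dop ε g)) • v0) := by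
  have key : P • ((aeval H g) • v0)
      = lam • ((aeval (H + algebraMap ℂ (UniversalEnvelopingAlgebra ℂ S) ε) g) • v0) := by
    rw [← mul_smul, comm_shift_aeval P H ε h1 g, mul_smul, h2, csmul_comm]
  rw [sub_smul, key, algebraMap_smul, Dop, map_smul, map_sub, aeval_taylor, smul_assoc,
    smul_smul, show ε * lam * ε = lam by rw [mul_comm ε lam, mul_assoc, hε, mul_one],
    sub_smul, smul_sub]

theorem Aiter (P H : UniversalEnvelopingAlgebra ℂ S) (lam ε : ℂ) (hε : ε * ε = 1)
    (v0 : UniversalEnvelopingAlgebra ℂ S ⧸ I)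
    (h1 : P * H = (H + algebraMap ℂ (UniversalEnvelopingAlgebra ℂ S) ε) * P)
    (h2 : P • v0 = lam • v0) :
    ∀ (s : ℕ) (g : ℂ[X]),
    ((P - algebraMap ℂ (UniversalEnvelopingAlgebra ℂ S) lam) ^ s) • ((aeval H g) • v0)
      = ((ε * lam) ^ s) • ((aeval H ((Dop ε)^[s] g)) • v0) := by
  intro s
  induction s with
  | zero => intro g; simp
  | succ s ih =>
    intro g
    rw [pow_succ', mul_smul, ih g, csmul_comm, Astep I P H lam ε hε v0 h1 h2,
      smul_smul, Function.iterate_succ_apply', ← pow_succ]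

/-- Core computation: action of powers of `P − λ` on `hᵗ·v₀`. -/
theorem core_calc (P H : UniversalEnvelopingAlgebra ℂ S) (lam ε : ℂ) (hε : ε * ε = 1)
    (v0 : UniversalEnvelopingAlgebra ℂ S ⧸ I)
    (h1 : P * H = (H + algebraMap ℂ (UniversalEnvelopingAlgebra ℂ S) ε) * P)
    (h2 : P • v0 = lam • v0) (s t : ℕ) :
    (t < s → ((P - algebraMap ℂ (UniversalEnvelopingAlgebra ℂ S) lam) ^ s) • ((H ^ t) • v0) = 0)
    ∧ ((P - algebraMap ℂ (UniversalEnvelopingAlgebra ℂ S) lam) ^ t) • ((H ^ t) • v0)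
      = (((ε * lam) ^ t) * (t.factorial : ℂ)) • v0 := by
  have hH : (H : UniversalEnvelopingAlgebra ℂ S) ^ t = aeval H (X ^ t : ℂ[X]) := by
    rw [map_pow, Polynomial.aeval_X]
  constructor
  · intro hst
    rw [hH, Aiter I P H lam ε hε v0 h1 h2 s (X ^ t), Dop_iter_X_pow_zero ε hε hst]
    simp
  · rw [hH, Aiter I P H lam ε hε v0 h1 h2 t (X ^ t), Dop_iter_X_pow ε hε t,
      Polynomial.aeval_C, algebraMap_smul, smul_smul]

end ModAux

section Wvec

variable (p q z : S) (φp φq : ℂ)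

theorem smul_wvec (u : UniversalEnvelopingAlgebra ℂ S) :
    u • wvec p q z φp φq = Submodule.Quotient.mk u := by
  show u • Submodule.Quotient.mk (1 : UniversalEnvelopingAlgebra ℂ S) = _
  rw [← Submodule.Quotient.mk_smul, smul_eq_mul, mul_one]

theorem csmul_wvec (c : ℂ) :
    c • wvec p q z φp φq
      = Submodule.Quotient.mk (algebraMap ℂ (UniversalEnvelopingAlgebra ℂ S) c) := by
  show c • Submodule.Quotient.mk (1 : UniversalEnvelopingAlgebra ℂ S) = _
  rw [← Submodule.Quotient.mk_smul, Algebra.algebraMap_eq_smul_one]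

theorem p_smul_wvec : (ι ℂ p) • wvec p q z φp φq = φp • wvec p q z φp φq := by
  rw [smul_wvec, csmul_wvec, Submodule.Quotient.eq]
  exact Submodule.subset_span (Set.mem_insert _ _)

theorem q_smul_wvec : (ι ℂ q) • wvec p q z φp φq = φq • wvec p q z φp φq := by
  rw [smul_wvec, csmul_wvec, Submodule.Quotient.eq]
  exact Submodule.subset_span (Set.mem_insert_of_mem _ (Set.mem_insert _ _))

end Wvec


theorem ι_mul (x y : S) :
    ι ℂ x * ι ℂ y = ι ℂ y * ι ℂ x + ι ℂ ⁅x, y⁆ := by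
  letI : LieRing (UniversalEnvelopingAlgebra ℂ S) := LieRing.ofAssociativeRing
  have hxy := LieHom.map_lie (ι ℂ : S →ₗ⁅ℂ⁆ UniversalEnvelopingAlgebra ℂ S) x y
  rw [Ring.lie_def] at hxy
  rw [hxy]
  abel

/-- For `φ` nonzero with `φ(p)φ(q) = 0`, `b ∈ ℂ[x]` and `s, t ∈ ℤ₊`:
`(P₋ − φ(P₋))ˢ·(hᵗ b(C)·w) = 0` if `s > t`, and
`(P₋ − φ(P₋))ᵗ·(hᵗ b(C)·w) = (φ(p)+φ(q))ᵗ (−1)^{(δ_{φ(p),0}+1)t} t! · b(C)·w`. -/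
theorem Pminus_power_action
    (e h f p q z : S) (hS : IsSchrodinger e h f p q z)
    (φp φq : ℂ) (hφ : φp ≠ 0 ∨ φq ≠ 0) (hpq : φp * φq = 0)
    (b : ℂ[X]) (s t : ℕ) :
    (s > t →
      uact ((Pminus p q φp φq - algebraMap ℂ _ (dC φq * φp + dC φp * φq)) ^ s)
        (uact (ι ℂ h ^ t * aeval (Cel e h f φp φq) b) (wvec p q z φp φq)) = 0) ∧
    uact ((Pminus p q φp φq - algebraMap ℂ _ (dC φq * φp + dC φp * φq)) ^ t)
        (uact (ι ℂ h ^ t * aeval (Cel e h f φp φq) b) (wvec p q z φp φq)) =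
      ((φp + φq) ^ t * (-1 : ℂ) ^ ((dN φp + 1) * t) * t.factorial) •
        uact (aeval (Cel e h f φp φq) b) (wvec p q z φp φq) := by
  rcases mul_eq_zero.mp hpq with hp0 | hq0
  · -- Case φp = 0, φq ≠ 0 : P₋ = q, ε = 1
    have hq : φq ≠ 0 := by
      rcases hφ with h' | h'
      · exact absurd hp0 h'
      · exact h'
    subst hp0
    have hdq : dC φq = 0 := if_neg hq
    have hdp : dC (0 : ℂ) = 1 := if_pos rfl
    have hdN : dN (0 : ℂ) = 1 := if_pos rfl
    have hP : Pminus p q 0 φq = ι ℂ q := by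
      rw [Pminus, hdq, hdp, zero_smul, one_smul, zero_add]
    have hconst : dC φq * 0 + dC (0 : ℂ) * φq = φq := by rw [hdq, hdp]; ring
    have hCel : Cel e h f 0 φq = (-(φq ^ 2)) • ι ℂ e := by
      rw [Cel]; simp
    -- commutation relations
    have rel_hq : ι ℂ q * ι ℂ h
        = (ι ℂ h + algebraMap ℂ (UniversalEnvelopingAlgebra ℂ S) (1 : ℂ)) * ι ℂ q := by
      have h1 : ⁅q, h⁆ = q := by rw [← lie_skew, hS.lie_hq, neg_neg]
      rw [ι_mul q h, h1, map_one, add_mul, one_mul]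
    have rel_pC : ι ℂ p * Cel e h f 0 φq = Cel e h f 0 φq * ι ℂ p + 0 := by
      have h1 : ⁅p, e⁆ = 0 := by rw [← lie_skew, hS.lie_ep, neg_zero]
      rw [hCel, mul_smul_comm, ι_mul p e, h1, map_zero, add_zero, add_zero,
        smul_mul_assoc]
    have rel_qC : ι ℂ q * Cel e h f 0 φq
        = Cel e h f 0 φq * ι ℂ q + (φq ^ 2) • ι ℂ p := by
      have h1 : ⁅q, e⁆ = -p := by rw [← lie_skew, hS.lie_eq]
      have h2 : ι ℂ q * ι ℂ e = ι ℂ e * ι ℂ q - ι ℂ p := by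
        rw [ι_mul q e, h1, map_neg, sub_eq_add_neg]
      rw [hCel, mul_smul_comm, h2, smul_mul_assoc]
      module
    -- action on the cyclic vector
    have hpCk0 : ∀ k : ℕ, ι ℂ p • ((Cel e h f 0 φq ^ k) • wvec p q z 0 φq) = 0 := by
      intro k
      rw [act_pow (qwIdeal p q z 0 φq) (ι ℂ p) (Cel e h f 0 φq) 0 0 (wvec p q z 0 φq)
        (by rw [rel_pC]) (by rw [p_smul_wvec])
        (fun k => by rw [zero_smul]) k, zero_smul]
    have hqCk : ∀ k : ℕ, ι ℂ q • ((Cel e h f 0 φq ^ k) • wvec p q z 0 φq)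
        = φq • ((Cel e h f 0 φq ^ k) • wvec p q z 0 φq) :=
      act_pow (qwIdeal p q z 0 φq) (ι ℂ q) (Cel e h f 0 φq) ((φq ^ 2) • ι ℂ p) φq
        (wvec p q z 0 φq) rel_qC (q_smul_wvec p q z 0 φq)
        (fun k => by rw [smul_assoc, hpCk0 k, smul_zero])
    have h2 : ι ℂ q • ((aeval (Cel e h f 0 φq) b) • wvec p q z 0 φq)
        = φq • ((aeval (Cel e h f 0 φq) b) • wvec p q z 0 φq) :=
      smul_aeval_of_smul_pow (qwIdeal p q z 0 φq) (ι ℂ q) (Cel e h f 0 φq) φq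
        (wvec p q z 0 φq) hqCk b
    have hcore := core_calc (qwIdeal p q z 0 φq) (ι ℂ q) (ι ℂ h) φq 1 (by norm_num)
      ((aeval (Cel e h f 0 φq) b) • wvec p q z 0 φq) rel_hq h2 s t
    simp only [uact_eq_smul, hP, hconst]
    rw [mul_smul (ι ℂ h ^ t) ((aeval (Cel e h f 0 φq)) b) (wvec p q z 0 φq)]
    have hsc : (0 + φq) ^ t * (-1 : ℂ) ^ ((dN (0 : ℂ) + 1) * t) * (t.factorial : ℂ)
        = (1 * φq) ^ t * (t.factorial : ℂ) := by
      rw [hdN, zero_add, one_mul]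
      rw [show (1 + 1) * t = 2 * t from rfl, pow_mul]
      norm_num
    exact ⟨hcore.1, by rw [hcore.2, hsc]⟩
  · -- Case φq = 0, φp ≠ 0 : P₋ = p, ε = -1
    have hp : φp ≠ 0 := by
      rcases hφ with h' | h'
      · exact h'
      · exact absurd hq0 h'
    subst hq0
    have hdq : dC (0 : ℂ) = 1 := if_pos rfl
    have hdp : dC φp = 0 := if_neg hp
    have hdN : dN φp = 0 := if_neg hp
    have hP : Pminus p q φp 0 = ι ℂ p := by
      rw [Pminus, hdq, hdp, zero_smul, one_smul, add_zero]
    have hconst : dC (0 : ℂ) * φp + dC φp * 0 = φp := by rw [hdq, hdp]; ring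
    have hCel : Cel e h f φp 0 = (φp ^ 2) • ι ℂ f := by
      rw [Cel]; simp
    have rel_hp : ι ℂ p * ι ℂ h
        = (ι ℂ h + algebraMap ℂ (UniversalEnvelopingAlgebra ℂ S) (-1 : ℂ)) * ι ℂ p := by
      have h1 : ⁅p, h⁆ = -p := by rw [← lie_skew, hS.lie_hp]
      have hm : algebraMap ℂ (UniversalEnvelopingAlgebra ℂ S) (-1 : ℂ) = -1 := by
        simp
      rw [ι_mul p h, h1, map_neg, hm, add_mul, neg_one_mul]
    have rel_qC : ι ℂ q * Cel e h f φp 0 = Cel e h f φp 0 * ι ℂ q + 0 := by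
      have h1 : ⁅q, f⁆ = 0 := by rw [← lie_skew, hS.lie_fq, neg_zero]
      rw [hCel, mul_smul_comm, ι_mul q f, h1, map_zero, add_zero, add_zero,
        smul_mul_assoc]
    have rel_pC : ι ℂ p * Cel e h f φp 0
        = Cel e h f φp 0 * ι ℂ p + (-(φp ^ 2)) • ι ℂ q := by
      have h1 : ⁅p, f⁆ = -q := hS.lie_pf
      have h2 : ι ℂ p * ι ℂ f = ι ℂ f * ι ℂ p - ι ℂ q := by
        rw [ι_mul p f, h1, map_neg, sub_eq_add_neg]
      rw [hCel, mul_smul_comm, h2, smul_mul_assoc]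
      module
    have hqCk0 : ∀ k : ℕ, ι ℂ q • ((Cel e h f φp 0 ^ k) • wvec p q z φp 0) = 0 := by
      intro k
      rw [act_pow (qwIdeal p q z φp 0) (ι ℂ q) (Cel e h f φp 0) 0 0 (wvec p q z φp 0)
        (by rw [rel_qC]) (by rw [q_smul_wvec])
        (fun k => by rw [zero_smul]) k, zero_smul]
    have hpCk : ∀ k : ℕ, ι ℂ p • ((Cel e h f φp 0 ^ k) • wvec p q z φp 0)
        = φp • ((Cel e h f φp 0 ^ k) • wvec p q z φp 0) :=
      act_pow (qwIdeal p q z φp 0) (ι ℂ p) (Cel e h f φp 0) ((-(φp ^ 2)) • ι ℂ q) φp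
        (wvec p q z φp 0) rel_pC (p_smul_wvec p q z φp 0)
        (fun k => by rw [smul_assoc, hqCk0 k, smul_zero])
    have h2 : ι ℂ p • ((aeval (Cel e h f φp 0) b) • wvec p q z φp 0)
        = φp • ((aeval (Cel e h f φp 0) b) • wvec p q z φp 0) :=
      smul_aeval_of_smul_pow (qwIdeal p q z φp 0) (ι ℂ p) (Cel e h f φp 0) φp
        (wvec p q z φp 0) hpCk b
    have hcore := core_calc (qwIdeal p q z φp 0) (ι ℂ p) (ι ℂ h) φp (-1) (by norm_num)
      ((aeval (Cel e h f φp 0) b) • wvec p q z φp 0) rel_hp h2 s t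
    simp only [uact_eq_smul, hP, hconst]
    rw [mul_smul (ι ℂ h ^ t) ((aeval (Cel e h f φp 0)) b) (wvec p q z φp 0)]
    have hsc : (φp + 0) ^ t * (-1 : ℂ) ^ ((dN φp + 1) * t) * (t.factorial : ℂ)
        = (-1 * φp) ^ t * (t.factorial : ℂ) := by
      rw [hdN, zero_add, one_mul, add_zero, mul_pow]
      ring
    exact ⟨hcore.1, by rw [hcore.2, hsc]⟩

end QW
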